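/- arXiv:2412.18891 — 4 statements merged into one kernel-verified Lean document; each statement's English description precedes it below -/
import Mathlib

section
/- Let G be a non-trivial group, let 𝒞 be a joinable compression family for G, and let H = ⟨⋃𝒞⟩ be the subgroup of G generated by the members of 𝒞. Then the derived subgroup D(H) is the monolith of G; that is, D(H) is a non-trivial normal subgroup of G which is contained in every non-trivial normal subgroup of G. -/
/-!
Conjugation invariance of 𝒞 makes `H` normal, and `D(H) ≠ 1` because the members of 𝒞 are
non-abelian. Let `N ≠ 1` be normal. For `1 ≠ n₀ ∈ N`, condition (B) gives `E ∈ 𝒞` commuting with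
`n₀En₀⁻¹`, and compressing `A ∈ 𝒞` into `E` yields `n ∈ N` with `[A, nAn⁻¹] = 1`. Modulo `N` the
subgroups `A` and `nAn⁻¹` agree, so `[A, A] ≤ N`. For `A, B ∈ 𝒞`, either `nAn⁻¹ ≤ B`, and then
`[A, B] ≡ [nAn⁻¹, B] ≤ [B, B]` modulo `N`, or joinability puts `A` and `B` into a common `D ∈ 𝒞`,
and then `[A, B] ≤ [D, D]`. Hence the image of `H` in `G/N` is abelian, i.e. `D(H) ≤ N`.
-/

namespace Paper

variable {G : Type*} [Group G]

/-- Conjugate of a subgroup: `g A g⁻¹`. -/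
def conjS (g : G) (A : Subgroup G) : Subgroup G := A.map (MulAut.conj g).toMonoidHom

/-- The family is invariant under conjugation in `G`. -/
def ConjInvariant (C : Set (Subgroup G)) : Prop := ∀ (g : G), ∀ A ∈ C, conjS g A ∈ C

/-- Condition (A): every member of the family is non-abelian. -/
def CondA (C : Set (Subgroup G)) : Prop :=
  ∀ A ∈ C, ∃ a ∈ A, ∃ b ∈ A, a * b ≠ b * a

/-- Condition (B): for every nontrivial element `g` of `H` there is a member `A` of the
family with `[A, gAg⁻¹] = 1`. -/
def CondB (C : Set (Subgroup G)) (H : Subgroup G) : Prop :=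
  ∀ g ∈ H, g ≠ 1 → ∃ A ∈ C, ⁅A, conjS g A⁆ = (⊥ : Subgroup G)

/-- Condition (C): `H` is semi-transitive on the family. -/
def CondC (C : Set (Subgroup G)) (H : Subgroup G) : Prop :=
  ∀ A ∈ C, ∀ B ∈ C, ∃ g ∈ H, conjS g A ≤ B

/-- Condition (D): the family is joinable. -/
def CondD (C : Set (Subgroup G)) : Prop :=
  ∀ A ∈ C, ∀ B ∈ C, ∀ C' ∈ C, ⁅A, C'⁆ = (⊥ : Subgroup G) → ¬ C' ≤ B →
    ∃ D ∈ C, A ⊔ B ≤ D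

/-- Condition (E): the family is shiftable over `H`: for each `A` in the family there is
`g ∈ H` and a homomorphism from the unrestricted direct product `∏_{i ≥ 1} A` into `H`
restricting to the identity on the first factor, which `g` conjugates by the shift. -/
def CondE (C : Set (Subgroup G)) (H : Subgroup G) : Prop :=
  ∀ A ∈ C, ∃ g ∈ H, ∃ φ : (ℕ → A) →* G,
    (∀ f : ℕ → A, φ f ∈ H) ∧
    (∀ a : A, φ (fun i => if i = 0 then a else 1) = (a : G)) ∧
    (∀ f : ℕ → A, g * φ f * g⁻¹ = φ (fun i => match i with | 0 => 1 | (n+1) => f n))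

/-- Conditions (A)–(C): a compression family for `H`. -/
def IsCompressionFamily (C : Set (Subgroup G)) (H : Subgroup G) : Prop :=
  ConjInvariant C ∧ CondA C ∧ CondB C H ∧ CondC C H

/-- Conditions (A)–(D): a joinable compression family for `H`. -/
def IsJoinableCompressionFamily (C : Set (Subgroup G)) (H : Subgroup G) : Prop :=
  IsCompressionFamily C H ∧ CondD C

/-- Conditions (A)–(E): a shift-joinable compression family for `H`. -/
def IsShiftJoinableCompressionFamily (C : Set (Subgroup G)) (H : Subgroup G) : Prop :=
  IsJoinableCompressionFamily C H ∧ CondE C H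

section Conjugation

lemma mem_conjS {g x : G} {A : Subgroup G} (hx : x ∈ A) : g * x * g⁻¹ ∈ conjS g A :=
  ⟨x, hx, rfl⟩

lemma conjS_one (A : Subgroup G) : conjS 1 A = A := by
  ext x; simp [conjS]

lemma conjS_mul (g h : G) (A : Subgroup G) : conjS (g * h) A = conjS g (conjS h A) := by
  ext x; simp [conjS, mul_assoc]

lemma conjS_inv_conjS (g : G) (A : Subgroup G) : conjS g⁻¹ (conjS g A) = A := by
  rw [← conjS_mul, inv_mul_cancel, conjS_one]

lemma conjS_mono (g : G) {A B : Subgroup G} (h : A ≤ B) : conjS g A ≤ conjS g B :=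
  Subgroup.map_mono h

lemma conjS_commutator (g : G) (A B : Subgroup G) :
    conjS g ⁅A, B⁆ = ⁅conjS g A, conjS g B⁆ :=
  Subgroup.map_commutator _ _ _

lemma sSup_normal_of_conjInvariant {C : Set (Subgroup G)} (hC : ConjInvariant C) :
    (sSup C).Normal := by
  have hle : ∀ g : G, conjS g (sSup C) ≤ sSup C := fun g => by
    rw [conjS, (Subgroup.gc_map_comap _).l_sSup]
    exact iSup₂_le fun A hA => le_sSup (hC g A hA)
  exact ⟨fun x hx g => hle g (mem_conjS hx)⟩

end Conjugation

section Commutators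

open QuotientGroup

lemma commutator_self_ne_bot {A : Subgroup G} (h : ∃ a ∈ A, ∃ b ∈ A, a * b ≠ b * a) :
    ⁅A, A⁆ ≠ ⊥ := by
  obtain ⟨a, ha, b, hb, hab⟩ := h
  intro hbot
  have hmem := Subgroup.commutator_mem_commutator ha hb
  rw [hbot, Subgroup.mem_bot, commutatorElement_eq_one_iff_mul_comm] at hmem
  exact hab hmem

lemma commutator_sSup_eq_bot {S : Set (Subgroup G)} (h : ∀ A ∈ S, ∀ B ∈ S, ⁅A, B⁆ = ⊥) :
    ⁅sSup S, sSup S⁆ = ⊥ := by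
  rw [Subgroup.commutator_eq_bot_iff_le_centralizer]
  refine sSup_le fun A hA => ?_
  rw [Subgroup.le_centralizer_iff]
  refine sSup_le fun B hB => ?_
  rw [← Subgroup.commutator_eq_bot_iff_le_centralizer]
  exact h B hB A hA

variable {N : Subgroup G} [N.Normal]

lemma commutator_le_iff_map_mk' {X Y : Subgroup G} :
    ⁅X, Y⁆ ≤ N ↔ ⁅X.map (mk' N), Y.map (mk' N)⁆ = ⊥ := by
  rw [← Subgroup.map_commutator, Subgroup.map_eq_bot_iff, ker_mk']

lemma map_mk'_conjS {n : G} (hn : n ∈ N) (Y : Subgroup G) :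
    (conjS n Y).map (mk' N) = Y.map (mk' N) := by
  have hn1 : (n : G ⧸ N) = 1 := (eq_one_iff n).mpr hn
  rw [conjS, Subgroup.map_map]
  congr 1
  ext x
  simp [hn1]

lemma commutator_conjS_right_le_iff {n : G} (hn : n ∈ N) {X Y : Subgroup G} :
    ⁅X, conjS n Y⁆ ≤ N ↔ ⁅X, Y⁆ ≤ N := by
  simp only [commutator_le_iff_map_mk', map_mk'_conjS hn]

lemma commutator_conjS_left_le_iff {n : G} (hn : n ∈ N) {X Y : Subgroup G} :
    ⁅conjS n X, Y⁆ ≤ N ↔ ⁅X, Y⁆ ≤ N := by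
  rw [Subgroup.commutator_comm, commutator_conjS_right_le_iff hn, Subgroup.commutator_comm]

lemma commutator_sSup_le {S : Set (Subgroup G)} (h : ∀ A ∈ S, ∀ B ∈ S, ⁅A, B⁆ ≤ N) :
    ⁅sSup S, sSup S⁆ ≤ N := by
  rw [commutator_le_iff_map_mk', (Subgroup.gc_map_comap _).l_sSup, ← sSup_image]
  refine commutator_sSup_eq_bot ?_
  rintro _ ⟨A, hA, rfl⟩ _ ⟨B, hB, rfl⟩
  exact commutator_le_iff_map_mk'.mp (h A hA B hB)

end Commutators

section CompressionFamily

variable {C : Set (Subgroup G)} {N A B : Subgroup G}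

lemma exists_mem_commutator_conjS_eq_bot {H : Subgroup G} (hB : CondB C ⊤) (hC : CondC C H)
    (hN : N.Normal) (hN' : N ≠ ⊥) (hA : A ∈ C) : ∃ n ∈ N, ⁅A, conjS n A⁆ = ⊥ := by
  obtain ⟨n₀, hn₀, hne⟩ := (N.bot_or_exists_ne_one).resolve_left hN'
  obtain ⟨E, hE, hcomm⟩ := hB n₀ trivial hne
  obtain ⟨g, -, hg⟩ := hC A hA E hE
  refine ⟨g⁻¹ * n₀ * g, by simpa using hN.conj_mem n₀ hn₀ g⁻¹, eq_bot_iff.mpr ?_⟩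
  calc ⁅A, conjS (g⁻¹ * n₀ * g) A⁆
      = conjS g⁻¹ ⁅conjS g A, conjS n₀ (conjS g A)⁆ := by
        rw [conjS_commutator, conjS_inv_conjS, conjS_mul, conjS_mul]
    _ ≤ conjS g⁻¹ ⁅E, conjS n₀ E⁆ :=
        conjS_mono _ (Subgroup.commutator_mono hg (conjS_mono _ hg))
    _ = ⊥ := by rw [hcomm, conjS, Subgroup.map_bot]

variable {H : Subgroup G} (hB : CondB C ⊤) (hC : CondC C H) (hN : N.Normal) (hN' : N ≠ ⊥)
include hB hC hN hN'

lemma commutator_self_le_of_mem (hA : A ∈ C) : ⁅A, A⁆ ≤ N := by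
  obtain ⟨n, hn, hcomm⟩ := exists_mem_commutator_conjS_eq_bot hB hC hN hN' hA
  exact (commutator_conjS_right_le_iff hn).mp (hcomm ▸ bot_le)

lemma commutator_le_of_mem (hInv : ConjInvariant C) (hD : CondD C) (hA : A ∈ C) (hB' : B ∈ C) :
    ⁅A, B⁆ ≤ N := by
  obtain ⟨n, hn, hcomm⟩ := exists_mem_commutator_conjS_eq_bot hB hC hN hN' hA
  by_cases hle : conjS n A ≤ B
  · exact (commutator_conjS_left_le_iff hn).mp
      ((Subgroup.commutator_mono hle le_rfl).trans (commutator_self_le_of_mem hB hC hN hN' hB'))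
  · obtain ⟨D, hD', hAB⟩ := hD A hA B hB' (conjS n A) (hInv n A hA) hcomm hle
    exact (Subgroup.commutator_mono (le_sup_left.trans hAB) (le_sup_right.trans hAB)).trans
      (commutator_self_le_of_mem hB hC hN hN' hD')

end CompressionFamily

/-- Theorem (compressible splittable union, part (i)): if 𝒞 is a joinable compression
family for `G` and `H = ⟨⋃𝒞⟩`, then the derived subgroup `D(H) = ⁅H,H⁆` is the monolith
of `G`: it is a non-trivial normal subgroup of `G` contained in every non-trivial normal
subgroup of `G`. -/
theorem derived_subgroup_is_monolith [Nontrivial G] (C : Set (Subgroup G))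
    (hC : IsJoinableCompressionFamily C (⊤ : Subgroup G))
    (H : Subgroup G) (hH : H = sSup C) :
    (⁅H, H⁆ : Subgroup G).Normal ∧ (⁅H, H⁆ : Subgroup G) ≠ ⊥ ∧
      ∀ N : Subgroup G, N.Normal → N ≠ ⊥ → (⁅H, H⁆ : Subgroup G) ≤ N := by
  obtain ⟨⟨hInv, hAbel, hB, hSemi⟩, hD⟩ := hC
  subst hH
  have := sSup_normal_of_conjInvariant hInv
  refine ⟨Subgroup.commutator_normal _ _, ?_, fun N hN hN' => ?_⟩
  · obtain ⟨g, hg⟩ := exists_ne (1 : G)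
    obtain ⟨A, hA, -⟩ := hB g trivial hg
    exact ne_bot_of_le_ne_bot (commutator_self_ne_bot (hAbel A hA))
      (Subgroup.commutator_mono (le_sSup hA) (le_sSup hA))
  · exact commutator_sSup_le fun A hA B hB' =>
      commutator_le_of_mem hB hSemi hN hN' hInv hD hA hB'

end Paper
end

section
/- Let G be a non-trivial group and let 𝒞 be a family of subgroups of G that is invariant under conjugation in G, such that every A ∈ 𝒞 is non-abelian and such that for every g ∈ G with g ≠ 1 there is A ∈ 𝒞 with [A, gAg⁻¹] = {1}. Then there exist pairwise distinct A, B, C ∈ 𝒞 such that [A, C] = {1} and C is not contained in B. -/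
/-!
Pick `g ≠ 1` and `A ∈ 𝒞` with `[A, gAg⁻¹] = 1`, and put `C' = gAg⁻¹`; since `A` is non-abelian and
commutes with `C'`, `A ≠ C'`. For `B`, apply (B) to an element `a ∈ A` that is not central in `A`:
it gives `A₂` with `[A₂, aA₂a⁻¹] = 1`. Neither `A₂` nor `aA₂a⁻¹` equals `A`, since either equality
forces both to be `aAa⁻¹ = A`, and `[A, A] ≠ 1`; and the non-abelian `C'` cannot lie
in both of these mutually commuting subgroups, so one of them serves as `B`.
-/
namespace Paper

variable {G : Type*} [Group G]

theorem commute_of_commutator_eq_bot {H K : Subgroup G} (hHK : ⁅H, K⁆ = ⊥) {x y : G}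
    (hx : x ∈ H) (hy : y ∈ K) : Commute x y :=
  (Subgroup.mem_centralizer_iff.mp (Subgroup.commutator_eq_bot_iff_le_centralizer.mp hHK hx) y
    hy).symm

theorem not_le_of_commutator_eq_bot {H K D : Subgroup G} (hHK : ⁅H, K⁆ = ⊥) (hDH : D ≤ H)
    {a b : G} (ha : a ∈ D) (hb : b ∈ D) (hab : a * b ≠ b * a) : ¬ D ≤ K :=
  fun hDK => hab (commute_of_commutator_eq_bot hHK (hDH ha) (hDK hb))

theorem conjS_injective (g : G) : Function.Injective (conjS g) :=
  Subgroup.map_injective (MulAut.conj g).injective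

theorem conjS_eq_self_of_mem {A : Subgroup G} {a : G} (ha : a ∈ A) : conjS a A = A := by
  ext x
  rw [conjS, Subgroup.mem_map_equiv, MulAut.conj_symm_apply]
  exact ⟨fun h => by simpa [mul_assoc] using A.mul_mem (A.mul_mem ha h) (A.inv_mem ha),
    fun h => A.mul_mem (A.mul_mem (A.inv_mem ha) h) ha⟩

theorem exists_mem_ne_not_le {C : Set (Subgroup G)} (hinv : ConjInvariant C)
    (hB : CondB C (⊤ : Subgroup G)) {A D : Subgroup G} {a b c d : G} (ha : a ∈ A) (hb : b ∈ A)
    (hab : a * b ≠ b * a) (hc : c ∈ D) (hd : d ∈ D) (hcd : c * d ≠ d * c) :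
    ∃ B ∈ C, B ≠ A ∧ ¬ D ≤ B := by
  have ha₁ : a ≠ 1 := by
    rintro rfl
    simp at hab
  obtain ⟨A₂, hA₂C, hA₂⟩ := hB a trivial ha₁
  have hA₂_ne : A₂ ≠ A := by
    rintro rfl
    exact not_le_of_commutator_eq_bot hA₂ le_rfl ha hb hab (conjS_eq_self_of_mem ha).ge
  have hconj_ne : conjS a A₂ ≠ A := fun h =>
    hA₂_ne (conjS_injective a (h.trans (conjS_eq_self_of_mem ha).symm))
  by_cases hDA₂ : D ≤ A₂
  · exact ⟨conjS a A₂, hinv a A₂ hA₂C, hconj_ne, not_le_of_commutator_eq_bot hA₂ hDA₂ hc hd hcd⟩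
  · exact ⟨A₂, hA₂C, hA₂_ne, hDA₂⟩

/-- Lemma (nondegeneracy): if every member of the conjugation-invariant family 𝒞 is
non-abelian and every non-trivial `g ∈ G` has some `A ∈ 𝒞` with `[A, gAg⁻¹] = 1`,
then there are pairwise distinct `A, B, C' ∈ 𝒞` with `[A, C'] = 1` and `C' ≰ B`. -/
theorem nondegenerate [Nontrivial G] (C : Set (Subgroup G))
    (hinv : ConjInvariant C) (hA : CondA C) (hB : CondB C (⊤ : Subgroup G)) :
    ∃ A ∈ C, ∃ B ∈ C, ∃ C' ∈ C, A ≠ B ∧ A ≠ C' ∧ B ≠ C' ∧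
      ⁅A, C'⁆ = (⊥ : Subgroup G) ∧ ¬ C' ≤ B := by
  obtain ⟨g, hg⟩ := exists_ne (1 : G)
  obtain ⟨A, hAC, hAC'⟩ := hB g trivial hg
  have hC'C : conjS g A ∈ C := hinv g A hAC
  obtain ⟨a, ha, b, hb, hab⟩ := hA A hAC
  obtain ⟨c, hc, d, hd, hcd⟩ := hA _ hC'C
  have hA_ne : A ≠ conjS g A := fun h =>
    not_le_of_commutator_eq_bot hAC' le_rfl ha hb hab h.le
  obtain ⟨B, hBC, hBA, hC'B⟩ := exists_mem_ne_not_le hinv hB ha hb hab hc hd hcd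
  refine ⟨A, hAC, B, hBC, conjS g A, hC'C, hBA.symm, hA_ne, ?_, hAC', hC'B⟩
  rintro rfl
  exact hC'B le_rfl

end Paper
end

section
/- Let G be a group acting faithfully on a set X, let H ≤ G, let 𝒞* be a G-invariant set of subsets of X, and let 𝒞 = {rist_G(Y) : Y ∈ 𝒞*}. Consider the properties: (i) rist_G(Y) is non-trivial for all Y ∈ 𝒞*; (ii) for every g ∈ G with g ≠ 1 there exists Z ∈ 𝒞* with Z ∩ gZ = ∅; (iii) for all Y, Z ∈ 𝒞* there exists g ∈ H with gY ⊆ Z; (iv) for all Y, Z ∈ 𝒞*, if rist_G(Y) is not contained in rist_G(Z) then there exists W ∈ 𝒞* with W ⊆ Y and rist_G(Z ∩ W) = {1}; (v) for all Y, Z ∈ 𝒞*, if rist_G(Y ∩ W₁) = rist_G(Z ∩ W₁) = {1} for some W₁ ∈ 𝒞*, then Y ∪ Z ⊆ W₂ for some W₂ ∈ 𝒞*. If (i)–(ii) hold then 𝒞 satisfies conditions (A) and (B) with H = G (𝒞 is nomadic for G); if (i)–(iii) hold then 𝒞 is a compression family for H; if (i)–(v) hold then 𝒞 is a joinable compression family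 for H. -/
/-!
Conjugation moves supports, `conjS g (rist G Y) = rist G (g • Y)`, and rigid stabilisers of
disjoint sets commute; this gives invariance, (B) and (C) directly. The key point is that under
(i) and (ii) no non-trivial `a ∈ rist G Y` is central in `rist G Y`: pick `Z ∈ 𝒞*` with
`Z ∩ a • Z = ∅`; then `Z ⊆ Y`, and a non-trivial `b ∈ rist G Z` cannot commute with `a`, since
`a` carries a point moved by `b` to a point fixed by `b`. This gives (A), and it shows that
`rist G (Y ∩ W) = 1` whenever `rist G Y` and `rist G W` commute, which turns (iv) and (v) into
joinability.
-/

open scoped Pointwise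

namespace Paper

variable {G : Type*} [Group G]

/-- The rigid stabiliser of `Y ⊆ X` in `G`: the pointwise stabiliser of `X ∖ Y`. -/
def rist (G : Type*) {X : Type*} [Group G] [MulAction G X] (Y : Set X) : Subgroup G where
  carrier := {g | ∀ x : X, x ∉ Y → g • x = x}
  one_mem' := fun x _ => one_smul G x
  mul_mem' := by
    intro a b ha hb x hx
    rw [mul_smul, hb x hx, ha x hx]
  inv_mem' := by
    intro a ha x hx
    nth_rewrite 1 [← ha x hx]
    exact inv_smul_smul a x


section Rist

variable {G X : Type*} [Group G] [MulAction G X]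

lemma rist_mono {Y Z : Set X} (h : Y ⊆ Z) : rist G Y ≤ rist G Z :=
  fun _ hg x hx => hg x fun hxY => hx (h hxY)

lemma conjS_rist (g : G) (Y : Set X) : conjS g (rist G Y) = rist G (g • Y) := by
  ext a
  simp only [conjS, Subgroup.mem_map, MulEquiv.coe_toMonoidHom, MulAut.conj_apply]
  constructor
  · rintro ⟨b, hb, rfl⟩ x hx
    have hx' : g⁻¹ • x ∉ Y := fun h => hx (by simpa using Set.smul_mem_smul_set (a := g) h)
    simp only [mul_smul, hb _ hx', smul_inv_smul]
  · intro ha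
    refine ⟨g⁻¹ * a * g, fun x hx => ?_, by group⟩
    have hx' : g • x ∉ g • Y := fun h => hx (Set.smul_mem_smul_set_iff.mp h)
    simp only [mul_smul, ha _ hx', inv_smul_smul]

lemma subset_of_mem_rist_of_inter_smul_eq_empty {Y Z : Set X} {a : G}
    (hZ : Z ∩ a • Z = ∅) (ha : a ∈ rist G Y) : Z ⊆ Y := by
  intro z hz
  by_contra hzY
  have hz' : z ∈ a • Z := ⟨z, hz, ha z hzY⟩
  exact (Set.eq_empty_iff_forall_notMem.mp hZ z) ⟨hz, hz'⟩

variable [FaithfulSMul G X]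

lemma commute_of_mem_rist_of_inter_eq_empty {Y Z : Set X} (h : Y ∩ Z = ∅) {a b : G}
    (ha : a ∈ rist G Y) (hb : b ∈ rist G Z) : Commute a b := by
  have hdisj : (MulAction.toPerm a : Equiv.Perm X).Disjoint (MulAction.toPerm b) := by
    intro x
    by_cases hxY : x ∈ Y
    · exact Or.inr (hb x fun hxZ => (Set.eq_empty_iff_forall_notMem.mp h x) ⟨hxY, hxZ⟩)
    · exact Or.inl (ha x hxY)
  have hcomm := Equiv.ext_iff.mp hdisj.commute.eq
  simp only [Equiv.Perm.mul_apply, MulAction.toPerm_apply] at hcomm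
  exact eq_of_smul_eq_smul (α := X) fun x => by rw [mul_smul, mul_smul, hcomm x]

lemma commutator_rist_eq_bot_of_inter_eq_empty {Y Z : Set X} (h : Y ∩ Z = ∅) :
    ⁅rist G Y, rist G Z⁆ = ⊥ :=
  le_bot_iff.mp <| Subgroup.commutator_le.mpr fun _ ha _ hb =>
    commutatorElement_eq_one_iff_commute.mpr (commute_of_mem_rist_of_inter_eq_empty h ha hb)

lemma not_commute_of_inter_smul_eq_empty {Z : Set X} {a b : G} (hZ : Z ∩ a • Z = ∅)
    (hb : b ∈ rist G Z) (hb1 : b ≠ 1) : ¬Commute a b := by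
  intro hab
  obtain ⟨z, hz⟩ : ∃ z : X, b • z ≠ z := by
    by_contra! hfix
    exact hb1 (eq_of_smul_eq_smul fun x => by rw [hfix, one_smul])
  have hzZ : z ∈ Z := by
    by_contra h
    exact hz (hb z h)
  have hazZ : a • z ∉ Z := fun h =>
    (Set.eq_empty_iff_forall_notMem.mp hZ _) ⟨h, Set.smul_mem_smul_set hzZ⟩
  have hswap : a • b • z = b • a • z := by rw [← mul_smul, ← mul_smul, hab.eq]
  rw [hb _ hazZ] at hswap
  exact hz (smul_left_cancel a hswap)

section Micro

variable {Cs : Set (Set X)} (hi : ∀ Y ∈ Cs, rist G Y ≠ ⊥)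
  (hii : ∀ g : G, g ≠ 1 → ∃ Z ∈ Cs, Z ∩ g • Z = ∅)
include hi hii

lemma exists_not_commute_of_mem_rist {Y : Set X} {a : G} (ha : a ∈ rist G Y) (ha1 : a ≠ 1) :
    ∃ b ∈ rist G Y, ¬Commute a b := by
  obtain ⟨Z, hZ, hdisj⟩ := hii a ha1
  obtain ⟨b, hbZ, hb1⟩ := ((rist G Z).bot_or_exists_ne_one).resolve_left (hi Z hZ)
  exact ⟨b, rist_mono (subset_of_mem_rist_of_inter_smul_eq_empty hdisj ha) hbZ,
    not_commute_of_inter_smul_eq_empty hdisj hbZ hb1⟩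

lemma rist_inter_eq_bot_of_commutator_eq_bot {Y W : Set X}
    (hYW : ⁅rist G Y, rist G W⁆ = ⊥) : rist G (Y ∩ W) = ⊥ := by
  refine (Subgroup.eq_bot_iff_forall _).mpr fun a ha => ?_
  by_contra ha1
  obtain ⟨b, hb, hab⟩ := exists_not_commute_of_mem_rist hi hii ha ha1
  have hbY : b ∈ rist G Y := rist_mono Set.inter_subset_left hb
  have haW : a ∈ rist G W := rist_mono Set.inter_subset_right ha
  exact hab ((Subgroup.commutator_eq_bot_iff_le_centralizer.mp hYW hbY) a haW)

end Micro

end Rist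

section Family

variable (G : Type*) {X : Type*} [Group G] [MulAction G X]

def ristFamily (Cs : Set (Set X)) : Set (Subgroup G) :=
  {A : Subgroup G | ∃ Y ∈ Cs, A = rist G Y}

variable {G} {Cs : Set (Set X)}

lemma rist_mem_ristFamily {Y : Set X} (hY : Y ∈ Cs) : rist G Y ∈ ristFamily G Cs :=
  ⟨Y, hY, rfl⟩

lemma conjInvariant_ristFamily (hinv : ∀ (g : G), ∀ Y ∈ Cs, g • Y ∈ Cs) :
    ConjInvariant (ristFamily G Cs) := by
  rintro g _ ⟨Y, hY, rfl⟩
  exact ⟨g • Y, hinv g Y hY, conjS_rist g Y⟩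

lemma condC_ristFamily {H : Subgroup G} (hiii : ∀ Y ∈ Cs, ∀ Z ∈ Cs, ∃ g ∈ H, g • Y ⊆ Z) :
    CondC (ristFamily G Cs) H := by
  rintro _ ⟨Y, hY, rfl⟩ _ ⟨Z, hZ, rfl⟩
  obtain ⟨g, hgH, hgYZ⟩ := hiii Y hY Z hZ
  exact ⟨g, hgH, conjS_rist g Y ▸ rist_mono hgYZ⟩

variable [FaithfulSMul G X]

lemma condB_ristFamily (H : Subgroup G) (hii : ∀ g : G, g ≠ 1 → ∃ Z ∈ Cs, Z ∩ g • Z = ∅) :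
    CondB (ristFamily G Cs) H := by
  intro g _ hg1
  obtain ⟨Z, hZ, hdisj⟩ := hii g hg1
  exact ⟨rist G Z, rist_mem_ristFamily hZ,
    conjS_rist g Z ▸ commutator_rist_eq_bot_of_inter_eq_empty hdisj⟩

variable (hi : ∀ Y ∈ Cs, rist G Y ≠ ⊥) (hii : ∀ g : G, g ≠ 1 → ∃ Z ∈ Cs, Z ∩ g • Z = ∅)
include hi hii

lemma condA_ristFamily : CondA (ristFamily G Cs) := by
  rintro _ ⟨Y, hY, rfl⟩
  obtain ⟨a, haY, ha1⟩ := ((rist G Y).bot_or_exists_ne_one).resolve_left (hi Y hY)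
  obtain ⟨b, hbY, hab⟩ := exists_not_commute_of_mem_rist hi hii haY ha1
  exact ⟨a, haY, b, hbY, hab⟩

lemma isCompressionFamily_ristFamily {H : Subgroup G} (hinv : ∀ (g : G), ∀ Y ∈ Cs, g • Y ∈ Cs)
    (hiii : ∀ Y ∈ Cs, ∀ Z ∈ Cs, ∃ g ∈ H, g • Y ⊆ Z) :
    IsCompressionFamily (ristFamily G Cs) H :=
  ⟨conjInvariant_ristFamily hinv, condA_ristFamily hi hii, condB_ristFamily H hii,
    condC_ristFamily hiii⟩

lemma condD_ristFamily
    (hiv : ∀ Y ∈ Cs, ∀ Z ∈ Cs, ¬ rist G Y ≤ rist G Z →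
      ∃ W ∈ Cs, W ⊆ Y ∧ rist G (Z ∩ W) = (⊥ : Subgroup G))
    (hv : ∀ Y ∈ Cs, ∀ Z ∈ Cs,
      (∃ W₁ ∈ Cs, rist G (Y ∩ W₁) = (⊥ : Subgroup G) ∧ rist G (Z ∩ W₁) = (⊥ : Subgroup G)) →
      ∃ W₂ ∈ Cs, Y ∪ Z ⊆ W₂) :
    CondD (ristFamily G Cs) := by
  rintro _ ⟨Y, hY, rfl⟩ _ ⟨Z, hZ, rfl⟩ _ ⟨W', hW', rfl⟩ hcomm hnle
  obtain ⟨W, hW, hWW', hZW⟩ := hiv W' hW' Z hZ hnle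
  have hYW : rist G (Y ∩ W) = ⊥ :=
    le_bot_iff.mp <| (rist_inter_eq_bot_of_commutator_eq_bot hi hii hcomm) ▸
      rist_mono (Set.inter_subset_inter_right Y hWW')
  obtain ⟨W₂, hW₂, hYZW₂⟩ := hv Y hY Z hZ ⟨W, hW, hYW, hZW⟩
  exact ⟨rist G W₂, rist_mem_ristFamily hW₂,
    sup_le (rist_mono (Set.union_subset_iff.mp hYZW₂).1)
      (rist_mono (Set.union_subset_iff.mp hYZW₂).2)⟩

end Family

/-- Lemma (micro-supported family): let `G` act faithfully on a set `X`, let `𝒞*` be a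
`G`-invariant set of subsets of `X`, and let `𝒞` be the corresponding family of rigid
stabilisers.  If (i)–(ii) hold then 𝒞 is nomadic for `G` (satisfies (A), (B) and is
conjugation-invariant); if (i)–(iii) hold then 𝒞 is a compression family for `H`; if
(i)–(v) hold then 𝒞 is a joinable compression family for `H`. -/
theorem micro_supported_family {G X : Type*} [Group G] [MulAction G X] [FaithfulSMul G X]
    (H : Subgroup G) (Cs : Set (Set X))
    (hinv : ∀ (g : G), ∀ Y ∈ Cs, g • Y ∈ Cs)
    (C : Set (Subgroup G)) (hC : C = {A : Subgroup G | ∃ Y ∈ Cs, A = rist G Y}) :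
    (((∀ Y ∈ Cs, rist G Y ≠ ⊥) ∧
      (∀ g : G, g ≠ 1 → ∃ Z ∈ Cs, Z ∩ g • Z = ∅)) →
        ConjInvariant C ∧ CondA C ∧ CondB C (⊤ : Subgroup G)) ∧
    (((∀ Y ∈ Cs, rist G Y ≠ ⊥) ∧
      (∀ g : G, g ≠ 1 → ∃ Z ∈ Cs, Z ∩ g • Z = ∅) ∧
      (∀ Y ∈ Cs, ∀ Z ∈ Cs, ∃ g ∈ H, g • Y ⊆ Z)) →
        IsCompressionFamily C H) ∧
    (((∀ Y ∈ Cs, rist G Y ≠ ⊥) ∧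
      (∀ g : G, g ≠ 1 → ∃ Z ∈ Cs, Z ∩ g • Z = ∅) ∧
      (∀ Y ∈ Cs, ∀ Z ∈ Cs, ∃ g ∈ H, g • Y ⊆ Z) ∧
      (∀ Y ∈ Cs, ∀ Z ∈ Cs, ¬ rist G Y ≤ rist G Z →
        ∃ W ∈ Cs, W ⊆ Y ∧ rist G (Z ∩ W) = (⊥ : Subgroup G)) ∧
      (∀ Y ∈ Cs, ∀ Z ∈ Cs,
        (∃ W₁ ∈ Cs, rist G (Y ∩ W₁) = (⊥ : Subgroup G) ∧
          rist G (Z ∩ W₁) = (⊥ : Subgroup G)) →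
        ∃ W₂ ∈ Cs, Y ∪ Z ⊆ W₂)) →
        IsJoinableCompressionFamily C H) := by
  subst hC
  exact ⟨fun ⟨hi, hii⟩ =>
      ⟨conjInvariant_ristFamily hinv, condA_ristFamily hi hii, condB_ristFamily ⊤ hii⟩,
    fun ⟨hi, hii, hiii⟩ => isCompressionFamily_ristFamily hi hii hinv hiii,
    fun ⟨hi, hii, hiii, hiv, hv⟩ =>
      ⟨isCompressionFamily_ristFamily hi hii hinv hiii, condD_ristFamily hi hii hiv hv⟩⟩

end Paper
end

section
/- Let G be a non-trivial group and let 𝒞 be a compression family for G. Then for all A, B ∈ 𝒞 there exists g ∈ G such that [A, gBg⁻¹] = {1}. -/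
namespace Paper

variable {G : Type*} [Group G]

/-! Condition (B) applied to some `h ≠ 1` gives `D ∈ 𝒞` commuting with `hDh⁻¹`; by semi-transitivity
`A` conjugates into `D` and `B` into `hDh⁻¹`, and conjugating back yields the claim. -/

lemma conjS_conjS (a b : G) (A : Subgroup G) : conjS a (conjS b A) = conjS (a * b) A := by
  rw [conjS, conjS, Subgroup.map_map, conjS, map_mul]
  rfl

lemma conjS_eq_bot_iff {g : G} {A : Subgroup G} : conjS g A = ⊥ ↔ A = ⊥ :=
  Subgroup.map_eq_bot_iff_of_injective _ (MulAut.conj g).injective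

lemma commutator_conjS_conjS_eq_bot_iff {g : G} {A B : Subgroup G} :
    ⁅conjS g A, conjS g B⁆ = ⊥ ↔ ⁅A, B⁆ = ⊥ := by
  rw [← conjS_commutator, conjS_eq_bot_iff]

lemma commutator_conjS_eq_bot_of_conjS_le {a b : G} {A B D E : Subgroup G}
    (hA : conjS a A ≤ D) (hB : conjS b B ≤ E) (hDE : ⁅D, E⁆ = ⊥) :
    ⁅A, conjS (a⁻¹ * b) B⁆ = ⊥ := by
  rw [← commutator_conjS_conjS_eq_bot_iff (g := a), conjS_conjS, mul_inv_cancel_left,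
    ← le_bot_iff, ← hDE]
  exact Subgroup.commutator_mono hA hB

/-- Lemma (double commutator, part (i)): if 𝒞 is a compression family for `G`, then for
all `A, B ∈ 𝒞` there exists `g ∈ G` with `[A, gBg⁻¹] = 1`. -/
theorem exists_commuting_conjugate [Nontrivial G] (C : Set (Subgroup G))
    (hC : IsCompressionFamily C (⊤ : Subgroup G)) :
    ∀ A ∈ C, ∀ B ∈ C, ∃ g : G, ⁅A, conjS g B⁆ = (⊥ : Subgroup G) := by
  obtain ⟨hconj, -, hcommuting, hsemitransitive⟩ := hC
  intro A hA B hB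
  obtain ⟨h, hh⟩ := exists_ne (1 : G)
  obtain ⟨D, hD, hDh⟩ := hcommuting h trivial hh
  obtain ⟨a, -, haA⟩ := hsemitransitive A hA D hD
  obtain ⟨b, -, hbB⟩ := hsemitransitive B hB (conjS h D) (hconj h D hD)
  exact ⟨a⁻¹ * b, commutator_conjS_eq_bot_of_conjS_le haA hbB hDh⟩

end Paper
end
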